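/- Let Δ_t : Ω → Ω⊠Ω be the unital ⋄-algebra map with Δ_t(a) = a⊠a, Δ_t(c) = c⊠c, Δ_t(b) = B + tA as above, and let τ : Ω⊠Ω → Ω⊠Ω be the signed flip τ(x⊠y) = (−1)^{l(x)l(y)} y⊠x. Then τ ∘ Δ_t = Δ_t if and only if t = 1/2. Consequently there is no t for which Δ_t is simultaneously cocommutative and coassociative. -/
import Mathlib


/-
STATEMENT 14: With Δ_t as before (Δ_t(a) = a⊠a, Δ_t(c) = c⊠c, Δ_t(b) = B + tA) and
τ : Ω⊠Ω → Ω⊠Ω the signed flip τ(x⊠y) = (−1)^{l(x)l(y)} y⊠x, one has τ∘Δ_t = Δ_t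
(equivalently, τ fixes the value of Δ_t on every generator) if and only if t = 1/2.
Consequently there is no t for which Δ_t is simultaneously cocommutative and
coassociative.  (Letters: 0 = a, 1 = b, 2 = c; l(b) = −1, l(a) = l(c) = 0.)
-/

noncomputable section

abbrev T2 : Type := (Fin 3 × Fin 3) →₀ ℝ
abbrev T3 : Type := (Fin 3 × Fin 3 × Fin 3) →₀ ℝ

def Bp : T2 := Finsupp.single (1, 0) 1 + Finsupp.single (2, 1) 1
def Ap : T2 := Finsupp.single (1, 2) 1 + Finsupp.single (0, 1) 1
  - Finsupp.single (1, 0) 1 - Finsupp.single (2, 1) 1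

def δt (t : ℝ) : Fin 3 → T2 :=
  fun i => if i = 1 then Bp + t • Ap else Finsupp.single (i, i) 1

def applyL (t : ℝ) (f : T2) : T3 :=
  f.sum fun p r => r • ((δt t p.1).sum fun q s => Finsupp.single (q.1, q.2, p.2) s)

def applyR (t : ℝ) (f : T2) : T3 :=
  f.sum fun p r => r • ((δt t p.2).sum fun q s => Finsupp.single (p.1, q.1, q.2) s)

/-- the signed flip τ(x⊠y) = (−1)^{l(x)l(y)} y⊠x on the span of letter pairs. -/
def flipP (f : T2) : T2 :=
  f.sum fun p r =>
    (((-1 : ℝ) ^ ((if p.1 = 1 then 1 else 0) * (if p.2 = 1 then 1 else 0) : ℕ)) * r) •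
      Finsupp.single (p.2, p.1) (1 : ℝ)

lemma combo (t : ℝ) : δt t 1 = Finsupp.single ((0:Fin 3),(1:Fin 3)) t
    + Finsupp.single (1,0) (1-t) + Finsupp.single (1,2) t + Finsupp.single (2,1) (1-t) := by
  simp only [δt, if_pos rfl, Bp, Ap]
  ext x
  simp [Finsupp.single_apply, Prod.ext_iff, sub_mul, mul_comm]
  rcases x with ⟨i, j⟩
  fin_cases i <;> fin_cases j <;> simp <;> ring

lemma δt0 (t : ℝ) : δt t 0 = Finsupp.single ((0:Fin 3),(0:Fin 3)) 1 := by simp [δt]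
lemma δt2 (t : ℝ) : δt t 2 = Finsupp.single ((2:Fin 3),(2:Fin 3)) 1 := by simp [δt]

lemma flipP_add (f g : T2) : flipP (f + g) = flipP f + flipP g := by
  apply Finsupp.sum_add_index' <;> intros <;> simp [mul_add, add_smul]

lemma flipP_single (p : Fin 3 × Fin 3) (r : ℝ) :
    flipP (Finsupp.single p r) =
    (((-1:ℝ) ^ ((if p.1 = 1 then 1 else 0) * (if p.2 = 1 then 1 else 0) : ℕ)) * r) •
      Finsupp.single (p.2, p.1) (1:ℝ) := by
  apply Finsupp.sum_single_index; simp

lemma flipP_combo (t : ℝ) : flipP (δt t 1) = Finsupp.single ((1:Fin 3),(0:Fin 3)) t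
    + Finsupp.single (0,1) (1-t) + Finsupp.single (2,1) t + Finsupp.single (1,2) (1-t) := by
  rw [combo, flipP_add, flipP_add, flipP_add, flipP_single, flipP_single, flipP_single,
    flipP_single]
  norm_num [Finsupp.smul_single, show ¬(2:Fin 3)=1 from by decide]

-- applyL / applyR helpers
lemma applyL_add (t : ℝ) (f g : T2) : applyL t (f + g) = applyL t f + applyL t g := by
  apply Finsupp.sum_add_index' <;> intros <;> simp [add_smul]

lemma applyR_add (t : ℝ) (f g : T2) : applyR t (f + g) = applyR t f + applyR t g := by
  apply Finsupp.sum_add_index' <;> intros <;> simp [add_smul]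

lemma applyL_single (t : ℝ) (p : Fin 3 × Fin 3) (r : ℝ) :
    applyL t (Finsupp.single p r)
    = r • ((δt t p.1).sum fun q s => Finsupp.single (q.1, q.2, p.2) s) := by
  apply Finsupp.sum_single_index; simp

lemma applyR_single (t : ℝ) (p : Fin 3 × Fin 3) (r : ℝ) :
    applyR t (Finsupp.single p r)
    = r • ((δt t p.2).sum fun q s => Finsupp.single (p.1, q.1, q.2) s) := by
  apply Finsupp.sum_single_index; simp

lemma sum_single3 {α : Type*} [AddCommMonoid α] (g : Fin 3 × Fin 3 → ℝ → α)
    (h0 : ∀ p, g p 0 = 0) (hadd : ∀ p r s, g p (r + s) = g p r + g p s)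
    (p1 p2 p3 p4 : Fin 3 × Fin 3) (r1 r2 r3 r4 : ℝ) :
    (Finsupp.single p1 r1 + Finsupp.single p2 r2 + Finsupp.single p3 r3
      + Finsupp.single p4 r4).sum g = g p1 r1 + g p2 r2 + g p3 r3 + g p4 r4 := by
  rw [Finsupp.sum_add_index' h0 hadd, Finsupp.sum_add_index' h0 hadd,
    Finsupp.sum_add_index' h0 hadd, Finsupp.sum_single_index (h0 _),
    Finsupp.sum_single_index (h0 _), Finsupp.sum_single_index (h0 _),
    Finsupp.sum_single_index (h0 _)]

theorem stmt14 :
    (∀ t : ℝ, (∀ i : Fin 3, flipP (δt t i) = δt t i) ↔ t = 1 / 2) ∧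
    (∀ t : ℝ, ¬ ((∀ i : Fin 3, flipP (δt t i) = δt t i) ∧
      applyL t (δt t 1) = applyR t (δt t 1))) := by
  have key : ∀ t : ℝ, (∀ i : Fin 3, flipP (δt t i) = δt t i) ↔ t = 1 / 2 := by
    intro t
    constructor
    · intro h
      have h1 := h 1
      rw [flipP_combo, combo] at h1
      have := DFunLike.congr_fun h1 ((1:Fin 3),(0:Fin 3))
      simp [Finsupp.single_apply, Prod.ext_iff] at this
      linarith
    · rintro rfl i
      fin_cases i
      · show flipP (δt (1/2) 0) = δt (1/2) 0
        rw [δt0, flipP_single]; norm_num [Finsupp.smul_single]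
      · show flipP (δt (1/2) 1) = δt (1/2) 1
        rw [flipP_combo, combo]; norm_num; abel
      · show flipP (δt (1/2) 2) = δt (1/2) 2
        rw [δt2, flipP_single]
        norm_num [Finsupp.smul_single, show ¬(2:Fin 3)=1 from by decide]
  refine ⟨key, ?_⟩
  rintro t ⟨hc, ha⟩
  have ht : t = 1/2 := (key t).1 hc
  subst ht
  -- compute both sides at (0,0,1)
  have comboH : δt (1/2 : ℝ) 1 = Finsupp.single ((0:Fin 3),(1:Fin 3)) (1/2)
      + Finsupp.single (1,0) (1/2) + Finsupp.single (1,2) (1/2)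
      + Finsupp.single (2,1) (1/2) := by
    rw [combo]; norm_num
  have hL : applyL (1/2) (δt (1/2) 1)
      = applyL (1/2) (Finsupp.single ((0:Fin 3),(1:Fin 3)) (1/2))
      + applyL (1/2) (Finsupp.single (1,0) (1/2))
      + applyL (1/2) (Finsupp.single (1,2) (1/2))
      + applyL (1/2) (Finsupp.single (2,1) (1/2)) := by
    rw [comboH, applyL_add, applyL_add, applyL_add]
  have hR : applyR (1/2) (δt (1/2) 1)
      = applyR (1/2) (Finsupp.single ((0:Fin 3),(1:Fin 3)) (1/2))
      + applyR (1/2) (Finsupp.single (1,0) (1/2))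
      + applyR (1/2) (Finsupp.single (1,2) (1/2))
      + applyR (1/2) (Finsupp.single (2,1) (1/2)) := by
    rw [comboH, applyR_add, applyR_add, applyR_add]
  rw [hL, hR] at ha
  have hinner1 : ∀ j : Fin 3, ((δt (1/2) 1).sum fun q s => Finsupp.single (q.1, q.2, j) s)
      = Finsupp.single ((0:Fin 3),(1:Fin 3),j) (1/2) + Finsupp.single (1,0,j) (1/2)
      + Finsupp.single (1,2,j) (1/2) + Finsupp.single (2,1,j) (1/2) := by
    intro j
    rw [comboH, sum_single3 _ (by simp) (by simp [Finsupp.single_add])]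
  have hinner1R : ∀ i : Fin 3, ((δt (1/2) 1).sum fun q s => Finsupp.single (i, q.1, q.2) s)
      = Finsupp.single (i,(0:Fin 3),(1:Fin 3)) (1/2) + Finsupp.single (i,1,0) (1/2)
      + Finsupp.single (i,1,2) (1/2) + Finsupp.single (i,2,1) (1/2) := by
    intro i
    rw [comboH, sum_single3 _ (by simp) (by simp [Finsupp.single_add])]
  have e0 : ∀ j : Fin 3, ((δt (1/2) 0).sum fun q s => Finsupp.single (q.1, q.2, j) s)
      = Finsupp.single ((0:Fin 3),(0:Fin 3),j) 1 := by
    intro j; rw [δt0]; exact Finsupp.sum_single_index (by simp)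
  have e2 : ∀ j : Fin 3, ((δt (1/2) 2).sum fun q s => Finsupp.single (q.1, q.2, j) s)
      = Finsupp.single ((2:Fin 3),(2:Fin 3),j) 1 := by
    intro j; rw [δt2]; exact Finsupp.sum_single_index (by simp)
  have e0R : ∀ i : Fin 3, ((δt (1/2) 0).sum fun q s => Finsupp.single (i, q.1, q.2) s)
      = Finsupp.single (i,(0:Fin 3),(0:Fin 3)) 1 := by
    intro i; rw [δt0]; exact Finsupp.sum_single_index (by simp)
  have e2R : ∀ i : Fin 3, ((δt (1/2) 2).sum fun q s => Finsupp.single (i, q.1, q.2) s)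
      = Finsupp.single (i,(2:Fin 3),(2:Fin 3)) 1 := by
    intro i; rw [δt2]; exact Finsupp.sum_single_index (by simp)
  have := DFunLike.congr_fun ha ((0:Fin 3),(0:Fin 3),(1:Fin 3))
  rw [applyL_single, applyL_single, applyL_single, applyL_single,
    applyR_single, applyR_single, applyR_single, applyR_single] at this
  simp only [hinner1, hinner1R, e0, e2, e0R, e2R] at this
  simp [Finsupp.single_apply, Prod.ext_iff] at this

end
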